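/- arXiv:1307.3990 — 4 statements merged into one kernel-verified Lean document; each statement's English description precedes it below -/
import Mathlib

section
/- The total coalescence rate λ_n = Σ_{k=2}^{n} C(n,k) λ_{n,k} is nondecreasing in n, i.e., λ_n ≤ λ_{n+1} for every n ≥ 2. -/
/-!
With `p_n(x, y) = Σ_{k=2}^n C(n,k) x^{k-2} y^{n-k}`, the rate `λ_n` is the integral of
`p_n(x, 1 - x)`. Pascal's rule gives `p_{n+1}(x, y) = (x + y) p_n(x, y) + n y^{n-1}`, so on `[0,1]`,
where `x + (1 - x) = 1` and `1 - x ≥ 0`, the integrand grows pointwise in `n`.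
-/

open MeasureTheory

/-- The coalescence rate `λ_{b,k} = ∫_{[0,1]} x^{k-2}(1-x)^{b-k} Λ(dx)`. -/
noncomputable def coalRate (Λ : Measure ℝ) (b k : ℕ) : ℝ :=
  ∫ x in Set.Icc (0:ℝ) 1, x ^ (k - 2) * (1 - x) ^ (b - k) ∂Λ

/-- The total coalescence rate `λ_n = Σ_{k=2}^n C(n,k) λ_{n,k}`. -/
noncomputable def totalRate (Λ : Measure ℝ) (n : ℕ) : ℝ :=
  ∑ k ∈ Finset.Icc 2 n, (n.choose k : ℝ) * coalRate Λ n k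

open Finset

section

variable {R : Type*} [CommSemiring R]

def coalPoly (n : ℕ) (x y : R) : R :=
  ∑ k ∈ Icc 2 n, (n.choose k : R) * (x ^ (k - 2) * y ^ (n - k))

theorem coalPoly_add_two (m : ℕ) (x y : R) :
    coalPoly (m + 2) x y =
      ∑ p ∈ antidiagonal m, ((m + 2).choose (p.1 + 2) : R) * (x ^ p.1 * y ^ p.2) := by
  rw [coalPoly, ← Ico_add_one_right_eq_Icc, sum_Ico_eq_sum_range,
    Nat.sum_antidiagonal_eq_sum_range_succ fun i j => ((m + 2).choose (i + 2) : R) * (x ^ i * y ^ j)]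
  refine sum_congr rfl fun j _ => ?_
  rw [add_comm 2 j, Nat.add_sub_cancel, Nat.add_sub_add_right]

theorem coalPoly_succ (n : ℕ) (x y : R) :
    coalPoly (n + 1) x y = (x + y) * coalPoly n x y + n * y ^ (n - 1) := by
  match n with
  | 0 => simp [coalPoly]
  | 1 => simp [coalPoly]
  | m + 2 =>
    have pascal (p : ℕ × ℕ) : ((m + 3).choose (p.1 + 2) : R) * (x ^ p.1 * y ^ p.2) =
        ((m + 2).choose (p.1 + 1) : R) * (x ^ p.1 * y ^ p.2) +
          ((m + 2).choose (p.1 + 2) : R) * (x ^ p.1 * y ^ p.2) := by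
      rw [Nat.choose_succ_succ', Nat.cast_add, add_mul]
    -- peeling `(0, m + 1)` off the first sum and `(m + 1, 0)` off the second leaves `x p_n` and `y p_n`
    rw [coalPoly_add_two, coalPoly_add_two, sum_congr rfl fun p _ => pascal p, sum_add_distrib,
      Nat.sum_antidiagonal_succ, Nat.sum_antidiagonal_succ', Nat.choose_succ_self,
      Nat.choose_one_right, add_mul, mul_sum, mul_sum]
    push_cast
    ring_nf

end

theorem continuous_coalPoly_one_sub (n : ℕ) : Continuous fun x : ℝ => coalPoly n x (1 - x) := by
  unfold coalPoly
  fun_prop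

theorem totalRate_eq_setIntegral_coalPoly (Λ : Measure ℝ) [IsFiniteMeasure Λ] (n : ℕ) :
    totalRate Λ n = ∫ x in Set.Icc (0 : ℝ) 1, coalPoly n x (1 - x) ∂Λ := by
  unfold totalRate coalPoly
  rw [integral_finsetSum _ fun k _ => Continuous.integrableOn_Icc (by fun_prop)]
  exact sum_congr rfl fun k _ => (integral_const_mul _ _).symm

theorem totalRate_mono_general (Λ : Measure ℝ) [IsFiniteMeasure Λ] (n : ℕ) :
    totalRate Λ n ≤ totalRate Λ (n + 1) := by
  rw [totalRate_eq_setIntegral_coalPoly, totalRate_eq_setIntegral_coalPoly]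
  refine setIntegral_mono_on (continuous_coalPoly_one_sub n).integrableOn_Icc
    (continuous_coalPoly_one_sub (n + 1)).integrableOn_Icc measurableSet_Icc fun x hx => ?_
  have hy : 0 ≤ 1 - x := sub_nonneg.mpr hx.2
  rw [coalPoly_succ, add_sub_cancel, one_mul]
  exact le_add_of_nonneg_right (by positivity)

/-- The total coalescence rate is nondecreasing: `λ_n ≤ λ_{n+1}` for all `n ≥ 2`. -/
theorem totalRate_mono (Λ : Measure ℝ) [IsFiniteMeasure Λ] (n : ℕ) (hn : 2 ≤ n) :
    totalRate Λ n ≤ totalRate Λ (n + 1) :=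
  totalRate_mono_general Λ n
end

section
/- Suppose there exist constants c > 0 and ε, γ ∈ (0,1) such that the restriction of Λ to [0,ε] is absolutely continuous with density at least c x^{-γ} on [0,ε]. Then there is a constant C(c,ε,γ) > 0 such that for all n ≥ 2, λ_n ≥ C(c,ε,γ) n^{1+γ}, and consequently Σ_{b=m+1}^{∞} 1/λ_b ≤ 1/(γ C(c,ε,γ) m^{γ}) for all m ≥ 1. -/
/-!
Only the binary mergers are needed: `λ_n ≥ C(n,2) λ_{n,2} = C(n,2) ∫ (1-x)^{n-2} Λ(dx)`.
On `[0, ε/n]` the integrand is at least `1 - ε` by Bernoulli's inequality, and the density bound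
gives `Λ[0, ε/n] ≥ c (ε/n)^{1-γ}/(1-γ)`; since `C(n,2) ≥ n²/4` this yields `λ_n ≳ n^{1+γ}`.
The tail estimate follows by comparing `Σ_{b>m} b^{-(1+γ)}` with `∫_m^∞ x^{-(1+γ)} dx = m^{-γ}/γ`.
-/

open MeasureTheory Set Finset

def HasCEpsGammaProperty (Λ : Measure ℝ) (c ε γ : ℝ) : Prop :=
  ∀ s : Set ℝ, MeasurableSet s → s ⊆ Set.Icc 0 ε →
    ENNReal.ofReal (∫ x in s, c * x ^ (-γ)) ≤ Λ s

theorem coalRate_nonneg (Λ : Measure ℝ) (n k : ℕ) : 0 ≤ coalRate Λ n k :=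
  setIntegral_nonneg measurableSet_Icc fun _ hx =>
    mul_nonneg (pow_nonneg hx.1 _) (pow_nonneg (sub_nonneg.2 hx.2) _)

theorem choose_two_mul_coalRate_le_totalRate (Λ : Measure ℝ) {n : ℕ} (hn : 2 ≤ n) :
    (n.choose 2 : ℝ) * coalRate Λ n 2 ≤ totalRate Λ n :=
  single_le_sum (f := fun k => (n.choose k : ℝ) * coalRate Λ n k)
    (fun k _ => mul_nonneg (Nat.cast_nonneg _) (coalRate_nonneg Λ n k))
    (Finset.mem_Icc.2 ⟨le_rfl, hn⟩)

theorem one_sub_mul_measureReal_Icc_le_coalRate_two (Λ : Measure ℝ)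
    [IsFiniteMeasureOnCompacts Λ] (n : ℕ) {a : ℝ} (ha : a ≤ 1) :
    (1 - n * a) * Λ.real (Icc 0 a) ≤ coalRate Λ n 2 := by
  have hsub : Icc (0:ℝ) a ⊆ Icc 0 1 := Icc_subset_Icc le_rfl ha
  have hint : IntegrableOn (fun x : ℝ => (1 - x) ^ (n - 2)) (Icc 0 1) Λ :=
    (by fun_prop : Continuous fun x : ℝ => (1 - x) ^ (n - 2)).continuousOn.integrableOn_compact
      isCompact_Icc
  have hbernoulli : ∀ x ∈ Icc (0:ℝ) a, 1 - n * a ≤ (1 - x) ^ (n - 2) := by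
    rintro x ⟨hx0, hxa⟩
    have hn : ((n - 2 : ℕ) : ℝ) ≤ n := by exact_mod_cast Nat.sub_le n 2
    calc 1 - n * a ≤ 1 + ((n - 2 : ℕ) : ℝ) * (-x) := by nlinarith
      _ ≤ (1 + (-x)) ^ (n - 2) := one_add_mul_le_pow (by linarith) _
      _ = (1 - x) ^ (n - 2) := by rw [← sub_eq_add_neg]
  calc (1 - n * a) * Λ.real (Icc 0 a) = ∫ _ in Icc (0:ℝ) a, (1 - n * a) ∂Λ := by
        rw [setIntegral_const, smul_eq_mul, mul_comm]
    _ ≤ ∫ x in Icc (0:ℝ) a, (1 - x) ^ (n - 2) ∂Λ :=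
        setIntegral_mono_on (integrableOn_const (isCompact_Icc.measure_lt_top.ne))
          (hint.mono_set hsub) measurableSet_Icc hbernoulli
    _ ≤ ∫ x in Icc (0:ℝ) 1, (1 - x) ^ (n - 2) ∂Λ := by
        refine setIntegral_mono_set hint ?_ hsub.eventuallyLE
        filter_upwards [ae_restrict_mem measurableSet_Icc] with x hx
        exact pow_nonneg (sub_nonneg.2 hx.2) _
    _ = coalRate Λ n 2 := by simp [coalRate]

theorem setIntegral_Icc_mul_rpow_neg {c γ a : ℝ} (hγ : γ < 1) (ha : 0 ≤ a) :
    ∫ x in Icc 0 a, c * x ^ (-γ) = c * a ^ (1 - γ) / (1 - γ) := by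
  rw [integral_Icc_eq_integral_Ioc, ← intervalIntegral.integral_of_le ha,
    intervalIntegral.integral_const_mul, integral_rpow (Or.inl (by linarith)),
    neg_add_eq_sub, Real.zero_rpow (by linarith), sub_zero, mul_div_assoc]

theorem HasCEpsGammaProperty.mul_rpow_div_le_measureReal_Icc {Λ : Measure ℝ}
    [IsFiniteMeasureOnCompacts Λ] {c ε γ a : ℝ} (h : HasCEpsGammaProperty Λ c ε γ)
    (hγ : γ < 1) (ha : 0 ≤ a) (haε : a ≤ ε) :
    c * a ^ (1 - γ) / (1 - γ) ≤ Λ.real (Icc 0 a) := by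
  have := h _ measurableSet_Icc (Icc_subset_Icc le_rfl haε)
  rwa [setIntegral_Icc_mul_rpow_neg hγ ha,
    ENNReal.ofReal_le_iff_le_toReal isCompact_Icc.measure_lt_top.ne] at this

theorem HasCEpsGammaProperty.mul_rpow_le_totalRate {Λ : Measure ℝ}
    [IsFiniteMeasureOnCompacts Λ] {c ε γ : ℝ} (h : HasCEpsGammaProperty Λ c ε γ)
    (hc : 0 ≤ c) (hε₀ : 0 < ε) (hε₁ : ε ≤ 1) (hγ : γ < 1) {n : ℕ} (hn : 2 ≤ n) :
    c * ε ^ (1 - γ) * (1 - ε) / (4 * (1 - γ)) * (n : ℝ) ^ ((1 : ℝ) + γ) ≤ totalRate Λ n := by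
  have hn₀ : (0:ℝ) < n := by positivity
  have hn₂ : (2:ℝ) ≤ n := by exact_mod_cast hn
  set a := ε / n with ha_def
  have ha₀ : 0 ≤ a := by positivity
  have haε : a ≤ ε := div_le_self hε₀.le (by linarith)
  have hna : (n : ℝ) * a = ε := mul_div_cancel₀ ε hn₀.ne'
  have hmeas := h.mul_rpow_div_le_measureReal_Icc hγ ha₀ haε
  have hcoal := one_sub_mul_measureReal_Icc_le_coalRate_two Λ n (haε.trans hε₁)
  rw [hna] at hcoal
  have hchoose : (n : ℝ) ^ 2 / 4 ≤ n.choose 2 := by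
    rw [Nat.cast_choose_two]; nlinarith
  have hpow : (n : ℝ) ^ ((1 : ℝ) + γ) = n ^ 2 / n ^ (1 - γ) := by
    rw [eq_div_iff (Real.rpow_pos_of_pos hn₀ _).ne', ← Real.rpow_add hn₀]
    norm_num
  calc c * ε ^ (1 - γ) * (1 - ε) / (4 * (1 - γ)) * (n : ℝ) ^ ((1 : ℝ) + γ)
      = (n : ℝ) ^ 2 / 4 * ((1 - ε) * (c * a ^ (1 - γ) / (1 - γ))) := by
        rw [hpow, ha_def, Real.div_rpow hε₀.le hn₀.le]
        field_simp
    _ ≤ n.choose 2 * ((1 - ε) * Λ.real (Icc 0 a)) := by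
        gcongr
    _ ≤ n.choose 2 * coalRate Λ n 2 := by gcongr
    _ ≤ totalRate Λ n := choose_two_mul_coalRate_le_totalRate Λ hn

theorem sum_range_rpow_neg_one_sub_le {γ x₀ : ℝ} (hγ : 0 < γ) (hx₀ : 0 < x₀) (N : ℕ) :
    ∑ i ∈ range N, (x₀ + ↑(i + 1)) ^ (-(1 + γ)) ≤ x₀ ^ (-γ) / γ := by
  have hanti : AntitoneOn (fun x : ℝ => x ^ (-(1 + γ))) (Icc x₀ (x₀ + N)) :=
    fun x hx y _ hxy => Real.rpow_le_rpow_of_nonpos (hx₀.trans_le hx.1) hxy (by linarith)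
  have hzero : (0:ℝ) ∉ uIcc x₀ (x₀ + N) := by
    rw [Set.uIcc_of_le (by simp)]
    exact fun h => hx₀.not_ge h.1
  calc ∑ i ∈ range N, (x₀ + ↑(i + 1)) ^ (-(1 + γ))
      ≤ ∫ x in x₀..x₀ + N, x ^ (-(1 + γ)) := hanti.sum_le_integral
    _ = (x₀ ^ (-γ) - (x₀ + N) ^ (-γ)) / γ := by
        rw [integral_rpow (Or.inr ⟨by linarith, hzero⟩), show -(1 + γ) + 1 = -γ by ring,
          div_neg, ← neg_div, neg_sub]
    _ ≤ x₀ ^ (-γ) / γ := by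
        gcongr
        exact sub_le_self _ (Real.rpow_nonneg (by positivity) _)

theorem tsum_one_div_le_of_mul_rpow_le {f : ℕ → ℝ} {C γ : ℝ} (hC : 0 < C) (hγ : 0 < γ)
    {m : ℕ} (hm : 1 ≤ m) (hf : ∀ n, m < n → C * (n : ℝ) ^ ((1 : ℝ) + γ) ≤ f n) :
    ∑' b : ℕ, 1 / f (m + 1 + b) ≤ 1 / (γ * C * (m : ℝ) ^ γ) := by
  have hm₀ : (0:ℝ) < m := by exact_mod_cast hm
  have hcast (b : ℕ) : ((m + 1 + b : ℕ) : ℝ) = m + ↑(b + 1) := by push_cast; ring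
  have hpos (b : ℕ) : 0 < C * ((m + 1 + b : ℕ) : ℝ) ^ ((1 : ℝ) + γ) := by positivity
  have hterm (b : ℕ) : 1 / f (m + 1 + b) ≤ C⁻¹ * ((m : ℝ) + ↑(b + 1)) ^ (-(1 + γ)) := by
    rw [← hcast, Real.rpow_neg (Nat.cast_nonneg _), ← mul_inv, ← one_div]
    exact one_div_le_one_div_of_le (hpos b) (hf _ (by omega))
  refine Real.tsum_le_of_sum_range_le
    (fun b => (one_div_pos.2 ((hpos b).trans_le (hf _ (by omega)))).le) fun N => ?_
  calc ∑ b ∈ range N, 1 / f (m + 1 + b)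
      ≤ ∑ b ∈ range N, C⁻¹ * ((m : ℝ) + ↑(b + 1)) ^ (-(1 + γ)) := sum_le_sum fun b _ => hterm b
    _ = C⁻¹ * ∑ b ∈ range N, ((m : ℝ) + ↑(b + 1)) ^ (-(1 + γ)) := (mul_sum ..).symm
    _ ≤ C⁻¹ * ((m : ℝ) ^ (-γ) / γ) := by
        gcongr
        exact sum_range_rpow_neg_one_sub_le hγ hm₀ N
    _ = 1 / (γ * C * (m : ℝ) ^ γ) := by
        rw [Real.rpow_neg hm₀.le]
        field_simp

/-- If `Λ` has the `(c,ε,γ)`-property, i.e. `Λ(dx) ≥ c x^{-γ} dx` on `[0,ε]`, then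
there is a constant `C = C(c,ε,γ) > 0` such that `λ_n ≥ C n^{1+γ}` for all `n ≥ 2`, and
consequently `Σ_{b=m+1}^∞ 1/λ_b ≤ 1/(γ C m^γ)` for all `m ≥ 1`. -/
theorem cEpsGamma_property_bound (Λ : Measure ℝ) [IsFiniteMeasure Λ]
    (c ε γ : ℝ) (hc : 0 < c) (hε : ε ∈ Set.Ioo (0:ℝ) 1) (hγ : γ ∈ Set.Ioo (0:ℝ) 1)
    (hdens : ∀ s : Set ℝ, MeasurableSet s → s ⊆ Set.Icc 0 ε →
      ENNReal.ofReal (∫ x in s, c * x ^ (-γ)) ≤ Λ s) :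
    ∃ C : ℝ, 0 < C ∧
      (∀ n : ℕ, 2 ≤ n → C * (n : ℝ) ^ ((1 : ℝ) + γ) ≤ totalRate Λ n) ∧
      (∀ m : ℕ, 1 ≤ m →
        ∑' b : ℕ, 1 / totalRate Λ (m + 1 + b) ≤ 1 / (γ * C * (m : ℝ) ^ γ)) := by
  obtain ⟨hε₀, hε₁⟩ := hε
  obtain ⟨hγ₀, hγ₁⟩ := hγ
  have hC : 0 < c * ε ^ (1 - γ) * (1 - ε) / (4 * (1 - γ)) := by
    have := sub_pos.2 hε₁
    have := sub_pos.2 hγ₁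
    positivity
  have hlower (n : ℕ) (hn : 2 ≤ n) := HasCEpsGammaProperty.mul_rpow_le_totalRate hdens
    hc.le hε₀ hε₁.le hγ₁ hn
  exact ⟨_, hC, hlower, fun m hm =>
    tsum_one_div_le_of_mul_rpow_le hC hγ₀ hm fun n hn => hlower n (by omega)⟩
end

section
/- Under Assumption I (there is α > 0 with limsup m^α E[T_m] < ∞), for every T > 0, almost surely for all sufficiently large n: max_{1 ≤ k ≤ 2^n T} N_{n,k} < 4^{n/α} n^{2/α}, where N_{n,k} is the number of ancestors at time (k-1)2^{-n} of all particles alive at time k 2^{-n}. -/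
open MeasureTheory Filter
open scoped ENNReal

/-! By Markov's inequality and Assumption I, `P(N_{n,k} ≥ M) = P(T_M ≥ 2^{-n}) ≤ 2^n C / M^α`.
For `M = ⌈4^{n/α} n^{2/α}⌉` a union bound over the `⌊2^n T⌋` indices `k` bounds the probability
that some `N_{n,k}` reaches `M` by `C T / n²`, which is summable, and Borel–Cantelli concludes. -/

namespace MeasureTheory

variable {Ω : Type*} [MeasurableSpace Ω] {μ : Measure Ω}

theorem ae_eventually_notMem_of_eventually_measure_le {s : ℕ → Set Ω} {f : ℕ → ℝ≥0∞}
    (hf : ∑' n, f n ≠ ∞) (hs : ∀ᶠ n in atTop, μ (s n) ≤ f n) :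
    ∀ᵐ ω ∂μ, ∀ᶠ n in atTop, ω ∉ s n := by
  obtain ⟨n₀, hn₀⟩ := hs.exists_forall_of_atTop
  have hshift : ∑' i, μ (s (i + n₀)) ≠ ∞ := ne_top_of_le_ne_top hf <|
    (ENNReal.tsum_le_tsum fun i => hn₀ _ (Nat.le_add_left _ _)).trans
      (ENNReal.tsum_comp_le_tsum_of_injective (add_left_injective n₀) f)
  filter_upwards [ae_eventually_notMem hshift] with ω hω
  filter_upwards [(tendsto_sub_atTop_nat n₀).eventually hω, eventually_ge_atTop n₀] with n h hn
  rwa [Nat.sub_add_cancel hn] at h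

theorem measure_setOf_exists_le_ofReal_mul {s : ℕ → Set Ω} {p : ℝ≥0∞} (hs : ∀ k, μ (s k) ≤ p)
    (x : ℝ) : μ {ω | ∃ k : ℕ, 1 ≤ k ∧ (k : ℝ) ≤ x ∧ ω ∈ s k} ≤ ENNReal.ofReal x * p := by
  have hfloor : (⌊x⌋₊ : ℝ≥0∞) ≤ ENNReal.ofReal x := by
    rcases le_total 0 x with hx | hx
    · rw [← ENNReal.ofReal_natCast]
      exact ENNReal.ofReal_le_ofReal (Nat.floor_le hx)
    · simp [Nat.floor_of_nonpos hx]
  calc μ {ω | ∃ k : ℕ, 1 ≤ k ∧ (k : ℝ) ≤ x ∧ ω ∈ s k}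
      ≤ μ (⋃ k ∈ Finset.Icc 1 ⌊x⌋₊, s k) := measure_mono fun ω ⟨k, hk, hkx, hω⟩ =>
        Set.mem_biUnion (Finset.mem_Icc.2 ⟨hk, Nat.le_floor hkx⟩) hω
    _ ≤ ∑ k ∈ Finset.Icc 1 ⌊x⌋₊, μ (s k) := measure_biUnion_finset_le _ _
    _ ≤ ∑ _k ∈ Finset.Icc 1 ⌊x⌋₊, p := Finset.sum_le_sum fun k _ => hs k
    _ = ⌊x⌋₊ * p := by simp
    _ ≤ ENNReal.ofReal x * p := by gcongr

end MeasureTheory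

theorem Real.rpow_div_mul_rpow_div_rpow {a b α : ℝ} (ha : 0 ≤ a) (hb : 0 ≤ b) (hα : α ≠ 0)
    (x y : ℝ) : (a ^ (x / α) * b ^ (y / α)) ^ α = a ^ x * b ^ y := by
  rw [Real.mul_rpow (by positivity) (by positivity), ← Real.rpow_mul ha, ← Real.rpow_mul hb,
    div_mul_cancel₀ _ hα, div_mul_cancel₀ _ hα]

theorem ENNReal.ofReal_rpow_le_natCeil_rpow {b p : ℝ} (hb : 0 ≤ b) (hp : 0 ≤ p) :
    ENNReal.ofReal (b ^ p) ≤ (⌈b⌉₊ : ℝ≥0∞) ^ p := by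
  rw [← ENNReal.ofReal_rpow_of_nonneg hb hp, ← ENNReal.ofReal_natCast]
  exact ENNReal.rpow_le_rpow (ENNReal.ofReal_le_ofReal (Nat.le_ceil b)) hp

theorem measure_exists_count_ge_le {Ω : Type*} [MeasurableSpace Ω] {P : Measure Ω}
    {N : ℕ → Ω → ℕ} {X : Ω → ℝ≥0∞} (hX : AEMeasurable X P) {n M : ℕ} (hn : n ≠ 0)
    (hlaw : ∀ k, P {ω | M ≤ N k ω} = P {ω | ENNReal.ofReal ((2 : ℝ) ^ (-(n : ℝ))) ≤ X ω})
    {a C : ℝ≥0∞} (ha : ENNReal.ofReal (4 ^ n * (n : ℝ) ^ 2) ≤ a) (hC : a * ∫⁻ ω, X ω ∂P ≤ C)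
    {T : ℝ} (hT : 0 ≤ T) :
    P {ω | ∃ k : ℕ, 1 ≤ k ∧ (k : ℝ) ≤ 2 ^ n * T ∧ M ≤ N k ω} ≤
      ENNReal.ofReal (T / n ^ 2) * C := by
  set ε := ENNReal.ofReal ((2 : ℝ) ^ (-(n : ℝ)))
  set p := P {ω | ε ≤ X ω}
  have markov : a * ε * p ≤ C :=
    calc a * ε * p = a * (ε * p) := mul_assoc _ _ _
      _ ≤ a * ∫⁻ ω, X ω ∂P := by gcongr; exact mul_meas_ge_le_lintegral₀ hX ε
      _ ≤ C := hC
  have hscale : ENNReal.ofReal (2 ^ n * T) =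
      ENNReal.ofReal (T / n ^ 2) * (ENNReal.ofReal (4 ^ n * (n : ℝ) ^ 2) * ε) := by
    rw [← ENNReal.ofReal_mul (by positivity), ← ENNReal.ofReal_mul (by positivity)]
    congr 1
    rw [Real.rpow_neg zero_le_two, Real.rpow_natCast, show (4 : ℝ) = 2 * 2 by norm_num, mul_pow]
    field_simp
  calc P {ω | ∃ k : ℕ, 1 ≤ k ∧ (k : ℝ) ≤ 2 ^ n * T ∧ M ≤ N k ω}
      ≤ ENNReal.ofReal (2 ^ n * T) * p :=
        measure_setOf_exists_le_ofReal_mul (fun k => (hlaw k).le) _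
    _ = ENNReal.ofReal (T / n ^ 2) * (ENNReal.ofReal (4 ^ n * (n : ℝ) ^ 2) * ε * p) := by
        rw [hscale, mul_assoc]
    _ ≤ ENNReal.ofReal (T / n ^ 2) * (a * ε * p) := by gcongr
    _ ≤ ENNReal.ofReal (T / n ^ 2) * C := by gcongr

theorem ancestor_count_bound_assumptionI_general {Ω : Type*} [MeasurableSpace Ω]
    (P : Measure Ω)
    (α T : ℝ) (hα : 0 < α) (hT : 0 < T)
    (N : ℕ → ℕ → Ω → ℕ)
    (Tm : ℕ → Ω → ℝ≥0∞) (hTmeas : ∀ m, Measurable (Tm m))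
    (hlink : ∀ n k M : ℕ,
      P {ω | M ≤ N n k ω} = P {ω | ENNReal.ofReal ((2 : ℝ) ^ (-(n : ℝ))) ≤ Tm M ω})
    (hAI : limsup (fun m : ℕ => (m : ℝ≥0∞) ^ α * ∫⁻ ω, Tm m ω ∂P) atTop < ⊤) :
    ∀ᵐ ω ∂P, ∀ᶠ n : ℕ in atTop, ∀ k : ℕ, 1 ≤ k → (k : ℝ) ≤ 2 ^ n * T →
      (N n k ω : ℝ) < 4 ^ ((n : ℝ) / α) * (n : ℝ) ^ (2 / α) := by
  obtain ⟨C, hAI_lt_C, -⟩ := ENNReal.lt_iff_exists_nnreal_btwn.1 hAI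
  obtain ⟨m₀, hm₀⟩ := (eventually_lt_of_limsup_lt hAI_lt_C).exists_forall_of_atTop
  set b : ℕ → ℝ := fun n => 4 ^ ((n : ℝ) / α) * (n : ℝ) ^ (2 / α)
  have hb_rpow (n : ℕ) : b n ^ α = 4 ^ n * (n : ℝ) ^ 2 := by
    simpa using Real.rpow_div_mul_rpow_div_rpow (by norm_num) n.cast_nonneg hα.ne' n 2
  have hb_tendsto : Tendsto b atTop atTop := by
    refine tendsto_atTop_mono (fun n => le_mul_of_one_le_left (by positivity)
      (Real.one_le_rpow (by norm_num) (by positivity))) ?_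
    exact (tendsto_rpow_atTop (by positivity)).comp tendsto_natCast_atTop_atTop
  set A : ℕ → Set Ω := fun n => {ω | ∃ k : ℕ, 1 ≤ k ∧ (k : ℝ) ≤ 2 ^ n * T ∧ ⌈b n⌉₊ ≤ N n k ω}
  have hA : ∀ᶠ n in atTop, P (A n) ≤ C * ENNReal.ofReal (T * (1 / n ^ 2)) := by
    filter_upwards [(tendsto_nat_ceil_atTop.comp hb_tendsto).eventually_ge_atTop m₀,
      eventually_ne_atTop 0] with n hn₀ hn
    rw [mul_comm, mul_one_div]
    refine measure_exists_count_ge_le (hTmeas _).aemeasurable hn (hlink n · _) ?_ (hm₀ _ hn₀).le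
      hT.le
    rw [← hb_rpow]
    exact ENNReal.ofReal_rpow_le_natCeil_rpow (by positivity) hα.le
  have hsum : ∑' n : ℕ, (C : ℝ≥0∞) * ENNReal.ofReal (T * (1 / n ^ 2)) ≠ ∞ := by
    rw [ENNReal.tsum_mul_left]
    exact ENNReal.mul_ne_top ENNReal.coe_ne_top
      ((Real.summable_one_div_nat_pow.2 one_lt_two).mul_left T).tsum_ofReal_ne_top
  filter_upwards [ae_eventually_notMem_of_eventually_measure_le hsum hA] with ω hω
  filter_upwards [hω] with n hn k hk hkT
  by_contra! hbN
  exact hn ⟨k, hk, hkT, Nat.ceil_le.2 hbN⟩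

/-- Under Assumption I (`limsup_m m^α E[T_m] < ∞`), for every `T > 0`, almost surely for
all large `n` we have `max_{1 ≤ k ≤ 2^n T} N_{n,k} < 4^{n/α} n^{2/α}`.  Here `N n k` is
the number of ancestors at time `(k-1)2^{-n}` of all particles alive at time `k 2^{-n}`,
which has the law of the number of blocks of the `Λ`-coalescent run for time `2^{-n}`,
so that `P(N_{n,k} ≥ M) = P(T_M ≥ 2^{-n})`. -/
theorem ancestor_count_bound_assumptionI {Ω : Type*} [MeasurableSpace Ω]
    (P : Measure Ω) [IsProbabilityMeasure P]
    (α T : ℝ) (hα : 0 < α) (hT : 0 < T)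
    (N : ℕ → ℕ → Ω → ℕ) (hNmeas : ∀ n k, Measurable (N n k))
    (Tm : ℕ → Ω → ℝ≥0∞) (hTmeas : ∀ m, Measurable (Tm m))
    (hlink : ∀ n k M : ℕ,
      P {ω | M ≤ N n k ω} = P {ω | ENNReal.ofReal ((2 : ℝ) ^ (-(n : ℝ))) ≤ Tm M ω})
    (hAI : limsup (fun m : ℕ => (m : ℝ≥0∞) ^ α * ∫⁻ ω, Tm m ω ∂P) atTop < ⊤) :
    ∀ᵐ ω ∂P, ∀ᶠ n : ℕ in atTop, ∀ k : ℕ, 1 ≤ k → (k : ℝ) ≤ 2 ^ n * T →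
      (N n k ω : ℝ) < 4 ^ ((n : ℝ) / α) * (n : ℝ) ^ (2 / α) :=
  ancestor_count_bound_assumptionI_general P α T hα hT N Tm hTmeas hlink hAI
end

section
/- Chaining along dyadics: let h(t)=sqrt(t log(1/t)) and let H: {(r,s): 0≤r≤s≤T} → [0,∞) satisfy H(r,s) ≤ H(r,t)+H(t,s) for r≤t≤s and H(r,r)=0. Suppose there are constants C_4 > 0 and N with 2^{-N} ≤ e^{-1} such that H((k-1)2^{-n}, k2^{-n}) ≤ C_4 h(2^{-n}) for all n > N and 1 ≤ k ≤ 2^n T. Then there is a constant C depending only on C_4 such that for all dyadic rationals r, s ∈ [0,T] with 0 < s - r ≤ 2^{-N}, H(r,s) ≤ C h(s-r). -/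
/-- The modulus function `h(t) = sqrt(t log(1/t))`. -/
noncomputable def modFun (t : ℝ) : ℝ := Real.sqrt (t * Real.log (1 / t))

/-!
Write `r = a 2^{-m}`, `s = b 2^{-m}` on a common fine grid and let `2^{-(n+1)} < s - r ≤ 2^{-n}`.
Halving the grid repeatedly, `[r, s]` is the union of a coarse interval one level up and at most
one grid step at each end, so `H(r, s)` is at most twice the sum of the step bounds at the levels
`n + 1, …, m`. Since `h(2^{-j})² = j 2^{-j} log 2` these bounds decay geometrically in `j`,
and their sum is a constant multiple of `h(2^{-(n+1)}) ≤ h(s - r)`.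
-/

open Real Finset

noncomputable def dyadic (m k : ℕ) : ℝ := k * ((2 : ℝ) ^ m)⁻¹

theorem dyadic_nonneg (m k : ℕ) : 0 ≤ dyadic m k := by
  unfold dyadic; positivity

theorem dyadic_le_dyadic_iff {m a b : ℕ} : dyadic m a ≤ dyadic m b ↔ a ≤ b := by
  unfold dyadic
  rw [mul_le_mul_iff_of_pos_right (by positivity), Nat.cast_le]

theorem dyadic_eq_of_le {p m : ℕ} (h : p ≤ m) (k : ℕ) :
    dyadic p k = dyadic m (k * 2 ^ (m - p)) := by
  obtain ⟨e, rfl⟩ := Nat.exists_eq_add_of_le h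
  unfold dyadic
  rw [Nat.add_sub_cancel_left, pow_add]
  push_cast
  field_simp

theorem dyadic_succ_mul_two (m k : ℕ) : dyadic (m + 1) (k * 2) = dyadic m k := by
  simpa using (dyadic_eq_of_le m.le_succ k).symm

theorem le_add_two_pow_of_dyadic_le {n j a b : ℕ}
    (h : dyadic (n + j) b ≤ dyadic (n + j) a + ((2 : ℝ) ^ n)⁻¹) : b ≤ a + 2 ^ j := by
  have hshift : dyadic (n + j) (a + 2 ^ j) = dyadic (n + j) a + ((2 : ℝ) ^ n)⁻¹ := by
    unfold dyadic
    rw [pow_add]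
    push_cast
    field_simp
  rwa [← hshift, dyadic_le_dyadic_iff] at h

theorem exists_common_dyadic_level {r s : ℝ} (hr : ∃ k p : ℕ, r = dyadic p k)
    (hs : ∃ l q : ℕ, s = dyadic q l) (n : ℕ) :
    ∃ d a b : ℕ, r = dyadic (n + d) a ∧ s = dyadic (n + d) b := by
  obtain ⟨k, p, rfl⟩ := hr
  obtain ⟨l, q, rfl⟩ := hs
  exact ⟨p + q, _, _, dyadic_eq_of_le (by omega) k, dyadic_eq_of_le (by omega) l⟩

theorem exists_inv_two_pow_lt_le {δ : ℝ} (hδ : 0 < δ) (hδ1 : δ ≤ 1) :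
    ∃ n : ℕ, ((2 : ℝ) ^ (n + 1))⁻¹ < δ ∧ δ ≤ ((2 : ℝ) ^ n)⁻¹ := by
  simpa only [inv_pow] using
    exists_nat_pow_near_of_lt_one (y := (2 : ℝ)⁻¹) hδ hδ1 (by norm_num) (by norm_num)

section Chaining

variable {T : ℝ} {H : ℝ → ℝ → ℝ}

theorem le_nat_mul_of_dyadic_step (hHrr : ∀ r, H r r = 0)
    (htri : ∀ r t s, 0 ≤ r → r ≤ t → t ≤ s → s ≤ T → H r s ≤ H r t + H t s)
    {m : ℕ} {ε : ℝ}
    (hstep : ∀ k, dyadic m (k + 1) ≤ T → H (dyadic m k) (dyadic m (k + 1)) ≤ ε)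
    (a j : ℕ) (hT : dyadic m (a + j) ≤ T) :
    H (dyadic m a) (dyadic m (a + j)) ≤ j * ε := by
  induction j with
  | zero => simp [hHrr]
  | succ j ih =>
    have hle : dyadic m (a + j) ≤ dyadic m (a + j + 1) := dyadic_le_dyadic_iff.2 (by omega)
    calc H (dyadic m a) (dyadic m (a + (j + 1)))
        ≤ H (dyadic m a) (dyadic m (a + j)) + H (dyadic m (a + j)) (dyadic m (a + j + 1)) :=
          htri _ _ _ (dyadic_nonneg _ _) (dyadic_le_dyadic_iff.2 (by omega)) hle hT
      _ ≤ j * ε + ε := add_le_add (ih (hle.trans hT)) (hstep _ hT)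
      _ = (j + 1 : ℕ) * ε := by push_cast; ring

theorem le_two_mul_sum_of_dyadic_step (hHrr : ∀ r, H r r = 0)
    (htri : ∀ r t s, 0 ≤ r → r ≤ t → t ≤ s → s ≤ T → H r s ≤ H r t + H t s)
    {L : ℕ} {ε : ℕ → ℝ} (hε : ∀ m, 0 ≤ ε m)
    (hstep : ∀ m, L < m → ∀ k, dyadic m (k + 1) ≤ T →
      H (dyadic m k) (dyadic m (k + 1)) ≤ ε m)
    (d : ℕ) : ∀ a b : ℕ, a ≤ b → b ≤ a + 2 ^ (d + 1) → dyadic (L + 1 + d) b ≤ T →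
      H (dyadic (L + 1 + d) a) (dyadic (L + 1 + d) b) ≤
        2 * ∑ i ∈ range (d + 1), ε (L + 1 + i) := by
  have few_steps : ∀ m, L < m → ∀ a b k : ℕ, a ≤ b → b ≤ a + k → dyadic m b ≤ T →
      H (dyadic m a) (dyadic m b) ≤ k * ε m := by
    intro m hm a b k hab hbk hbT
    obtain ⟨j, rfl⟩ := Nat.exists_eq_add_of_le hab
    calc H (dyadic m a) (dyadic m (a + j)) ≤ j * ε m :=
          le_nat_mul_of_dyadic_step hHrr htri (hstep m hm) a j hbT
      _ ≤ k * ε m := by gcongr; exacts [hε m, by omega]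
  induction d with
  | zero =>
    intro a b hab hb hbT
    simpa using few_steps (L + 1) (by omega) a b 2 hab hb hbT
  | succ d ih =>
    intro a b hab hb hbT
    change dyadic (L + 1 + d + 1) b ≤ T at hbT
    change H (dyadic (L + 1 + d + 1) a) (dyadic (L + 1 + d + 1) b) ≤ _
    rcases hab.eq_or_lt with rfl | hlt
    · rw [hHrr]
      exact mul_nonneg zero_le_two (sum_nonneg fun i _ => hε _)
    -- the coarse interval is `[⌈a/2⌉, ⌊b/2⌋]` one level up
    set a' := (a + 1) / 2
    set b' := b / 2
    have h1 : dyadic (L + 1 + d + 1) a ≤ dyadic (L + 1 + d + 1) (a' * 2) :=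
      dyadic_le_dyadic_iff.2 (by omega)
    have h2 : dyadic (L + 1 + d + 1) (a' * 2) ≤ dyadic (L + 1 + d + 1) (b' * 2) :=
      dyadic_le_dyadic_iff.2 (by omega)
    have h3 : dyadic (L + 1 + d + 1) (b' * 2) ≤ dyadic (L + 1 + d + 1) b :=
      dyadic_le_dyadic_iff.2 (by omega)
    have hmid := ih a' b' (by omega) (by rw [pow_succ _ (d + 1)] at hb; omega)
      (by rw [← dyadic_succ_mul_two]; exact h3.trans hbT)
    rw [← dyadic_succ_mul_two (L + 1 + d) a', ← dyadic_succ_mul_two (L + 1 + d) b'] at hmid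
    calc H (dyadic (L + 1 + d + 1) a) (dyadic (L + 1 + d + 1) b)
        ≤ H (dyadic (L + 1 + d + 1) a) (dyadic (L + 1 + d + 1) (a' * 2)) +
            (H (dyadic (L + 1 + d + 1) (a' * 2)) (dyadic (L + 1 + d + 1) (b' * 2)) +
              H (dyadic (L + 1 + d + 1) (b' * 2)) (dyadic (L + 1 + d + 1) b)) :=
          (htri _ _ _ (dyadic_nonneg _ _) h1 (h2.trans h3) hbT).trans <| add_le_add le_rfl
            (htri _ _ _ (dyadic_nonneg _ _) h2 h3 hbT)
      _ ≤ (1 : ℕ) * ε (L + 1 + d + 1) +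
            (2 * ∑ i ∈ range (d + 1), ε (L + 1 + i) + (1 : ℕ) * ε (L + 1 + d + 1)) := by
          gcongr
          · exact few_steps _ (by omega) _ _ 1 (by omega) (by omega) ((h2.trans h3).trans hbT)
          · exact few_steps _ (by omega) _ _ 1 (by omega) (by omega) hbT
      _ = 2 * ∑ i ∈ range (d + 1 + 1), ε (L + 1 + i) := by
          rw [sum_range_succ _ (d + 1)]; push_cast; ring_nf

theorem dyadic_step_le_of_increment_le {N : ℕ} {ε : ℕ → ℝ}
    (hdy : ∀ n : ℕ, N < n → ∀ k : ℕ, 1 ≤ k → (k : ℝ) ≤ 2 ^ n * T →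
      H (((k : ℝ) - 1) * ((2 : ℝ) ^ n)⁻¹) ((k : ℝ) * ((2 : ℝ) ^ n)⁻¹) ≤ ε n)
    (m : ℕ) (hm : N < m) (k : ℕ) (hk : dyadic m (k + 1) ≤ T) :
    H (dyadic m k) (dyadic m (k + 1)) ≤ ε m := by
  rw [dyadic, ← div_eq_mul_inv, div_le_iff₀ (by positivity), mul_comm] at hk
  simpa [dyadic] using hdy m hm (k + 1) (by omega) hk

end Chaining

theorem modFun_nonneg (t : ℝ) : 0 ≤ modFun t := sqrt_nonneg _

theorem modFun_eq_sqrt_negMulLog (t : ℝ) : modFun t = √(negMulLog t) := by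
  rw [modFun, negMulLog, one_div, log_inv]
  ring_nf

theorem negMulLog_monotoneOn : MonotoneOn negMulLog (Set.Icc 0 (exp (-1))) := by
  refine monotoneOn_of_deriv_nonneg (convex_Icc _ _) continuous_negMulLog.continuousOn
    (differentiableOn_negMulLog.mono fun x hx => ?_) fun x hx => ?_
  all_goals rw [interior_Icc] at hx
  · exact hx.1.ne'
  · have hlog : log x < -1 := by simpa using log_lt_log hx.1 hx.2
    rw [deriv_negMulLog hx.1.ne']
    linarith

theorem modFun_monotoneOn : MonotoneOn modFun (Set.Icc 0 (exp (-1))) := by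
  intro x hx y hy hxy
  simp only [modFun_eq_sqrt_negMulLog]
  exact sqrt_le_sqrt (negMulLog_monotoneOn hx hy hxy)

theorem modFun_inv_two_pow (j : ℕ) :
    modFun ((2 : ℝ) ^ j)⁻¹ = √((2 ^ j)⁻¹ * (j * log 2)) := by
  rw [modFun, one_div, inv_inv, log_pow]

theorem one_add_le_four_mul_pow (i : ℕ) : (1 + i : ℝ) ≤ 4 * (32 / 25) ^ i := by
  induction i with
  | zero => norm_num
  | succ i ih =>
    have : (1 : ℝ) ≤ (32 / 25) ^ i := one_le_pow₀ (by norm_num)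
    push_cast
    rw [pow_succ]
    nlinarith

theorem modFun_inv_two_pow_add_le {j : ℕ} (hj : 1 ≤ j) (i : ℕ) :
    modFun ((2 : ℝ) ^ (j + i))⁻¹ ≤ 2 * (4 / 5) ^ i * modFun ((2 : ℝ) ^ j)⁻¹ := by
  rw [modFun_inv_two_pow, modFun_inv_two_pow,
    ← sqrt_sq (by positivity : (0 : ℝ) ≤ 2 * (4 / 5) ^ i), ← sqrt_mul (by positivity)]
  apply sqrt_le_sqrt
  have hji : (j + i : ℝ) ≤ j * (4 * (32 / 25) ^ i) := by
    have : (1 : ℝ) ≤ j := by exact_mod_cast hj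
    nlinarith [one_add_le_four_mul_pow i]
  have hpow : (32 / 25 : ℝ) ^ i = ((4 / 5) ^ i) ^ 2 * 2 ^ i := by
    rw [← pow_mul, mul_comm i 2, pow_mul, ← mul_pow]; norm_num
  calc ((2 : ℝ) ^ (j + i))⁻¹ * ((j + i : ℕ) * log 2)
      = (j + i) * ((2 ^ (j + i))⁻¹ * log 2) := by push_cast; ring
    _ ≤ j * (4 * (32 / 25) ^ i) * ((2 ^ (j + i))⁻¹ * log 2) := by gcongr
    _ = (2 * (4 / 5) ^ i) ^ 2 * ((2 ^ j)⁻¹ * (j * log 2)) := by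
        rw [hpow, pow_add]; field_simp; norm_num

theorem sum_modFun_inv_two_pow_add_le {j : ℕ} (hj : 1 ≤ j) (d : ℕ) :
    ∑ i ∈ range d, modFun ((2 : ℝ) ^ (j + i))⁻¹ ≤ 10 * modFun ((2 : ℝ) ^ j)⁻¹ := by
  have hgeom : ∑ i ∈ range d, (4 / 5 : ℝ) ^ i ≤ 5 := by
    have h := geom_sum_Ico_le_of_lt_one (x := (4 / 5 : ℝ)) (m := 0) (n := d) (by norm_num)
      (by norm_num)
    norm_num [← range_eq_Ico] at h
    exact h
  calc ∑ i ∈ range d, modFun ((2 : ℝ) ^ (j + i))⁻¹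
      ≤ ∑ i ∈ range d, 2 * (4 / 5) ^ i * modFun ((2 : ℝ) ^ j)⁻¹ :=
        sum_le_sum fun i _ => modFun_inv_two_pow_add_le hj i
    _ = 2 * modFun ((2 : ℝ) ^ j)⁻¹ * ∑ i ∈ range d, (4 / 5 : ℝ) ^ i := by
        rw [mul_sum]; exact sum_congr rfl fun i _ => by ring
    _ ≤ 2 * modFun ((2 : ℝ) ^ j)⁻¹ * 5 := by
        have := modFun_nonneg ((2 : ℝ) ^ j)⁻¹
        gcongr
    _ = 10 * modFun ((2 : ℝ) ^ j)⁻¹ := by ring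

theorem dyadic_chaining_general (T C₄ : ℝ) (hC₄ : 0 < C₄) (N : ℕ)
    (hN : ((2 : ℝ) ^ N)⁻¹ ≤ Real.exp (-1))
    (H : ℝ → ℝ → ℝ)
    (hHrr : ∀ r : ℝ, H r r = 0)
    (htri : ∀ r t s : ℝ, 0 ≤ r → r ≤ t → t ≤ s → s ≤ T → H r s ≤ H r t + H t s)
    (hdy : ∀ n : ℕ, N < n → ∀ k : ℕ, 1 ≤ k → (k : ℝ) ≤ 2 ^ n * T →
      H (((k : ℝ) - 1) * ((2 : ℝ) ^ n)⁻¹) ((k : ℝ) * ((2 : ℝ) ^ n)⁻¹) ≤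
        C₄ * modFun (((2 : ℝ) ^ n)⁻¹)) :
    ∃ C : ℝ, 0 < C ∧ ∀ r s : ℝ,
      (∃ k n : ℕ, r = (k : ℝ) * ((2 : ℝ) ^ n)⁻¹) →
      (∃ k n : ℕ, s = (k : ℝ) * ((2 : ℝ) ^ n)⁻¹) →
      0 ≤ r → s ≤ T → 0 < s - r → s - r ≤ ((2 : ℝ) ^ N)⁻¹ →
      H r s ≤ C * modFun (s - r) := by
  refine ⟨20 * C₄, by positivity, fun r s hr hs _ hsT hpos hle => ?_⟩
  have hδ : s - r ≤ exp (-1) := hle.trans hN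
  obtain ⟨n, hn1, hn⟩ := exists_inv_two_pow_lt_le hpos (hδ.trans (by norm_num))
  have hNn : N < n + 1 := by
    have h := hn1.trans_le hle
    rwa [inv_lt_inv₀ (by positivity) (by positivity), pow_lt_pow_iff_right₀ one_lt_two] at h
  obtain ⟨d, a, b, rfl, rfl⟩ := exists_common_dyadic_level hr hs (n + 1)
  have hab : a ≤ b := dyadic_le_dyadic_iff.1 (by linarith)
  have hb : b ≤ a + 2 ^ (d + 1) :=
    le_add_two_pow_of_dyadic_le (n := n) (by rw [show n + (d + 1) = n + 1 + d by omega]; linarith)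
  calc H (dyadic (n + 1 + d) a) (dyadic (n + 1 + d) b)
      ≤ 2 * ∑ i ∈ range (d + 1), C₄ * modFun ((2 : ℝ) ^ (n + 1 + i))⁻¹ :=
        le_two_mul_sum_of_dyadic_step hHrr htri (fun m => mul_nonneg hC₄.le (modFun_nonneg _))
          (fun m hm => dyadic_step_le_of_increment_le hdy m (by omega)) d a b hab hb hsT
    _ = 2 * C₄ * ∑ i ∈ range (d + 1), modFun ((2 : ℝ) ^ (n + 1 + i))⁻¹ := by
        rw [← mul_sum]; ring
    _ ≤ 2 * C₄ * (10 * modFun ((2 : ℝ) ^ (n + 1))⁻¹) := by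
        gcongr; exact sum_modFun_inv_two_pow_add_le (by omega) _
    _ ≤ 2 * C₄ * (10 * modFun (dyadic (n + 1 + d) b - dyadic (n + 1 + d) a)) := by
        gcongr
        exact modFun_monotoneOn ⟨by positivity, hn1.le.trans hδ⟩ ⟨hpos.le, hδ⟩ hn1.le
    _ = 20 * C₄ * modFun (dyadic (n + 1 + d) b - dyadic (n + 1 + d) a) := by ring

/-- Chaining along dyadics: if a nonnegative subadditive-in-time function `H` with
`H(r,r) = 0` satisfies `H((k-1)2^{-n}, k2^{-n}) ≤ C₄ h(2^{-n})` for all `n > N` and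
`1 ≤ k ≤ 2^n T`, where `2^{-N} ≤ e^{-1}`, then there is a constant `C > 0` (depending
only on `C₄`) such that `H(r,s) ≤ C h(s-r)` for all dyadic rationals `r, s ∈ [0,T]`
with `0 < s - r ≤ 2^{-N}`. -/
theorem dyadic_chaining (T C₄ : ℝ) (hT : 0 < T) (hC₄ : 0 < C₄) (N : ℕ)
    (hN : ((2 : ℝ) ^ N)⁻¹ ≤ Real.exp (-1))
    (H : ℝ → ℝ → ℝ)
    (hHnn : ∀ r s : ℝ, 0 ≤ H r s)
    (hHrr : ∀ r : ℝ, H r r = 0)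
    (htri : ∀ r t s : ℝ, 0 ≤ r → r ≤ t → t ≤ s → s ≤ T → H r s ≤ H r t + H t s)
    (hdy : ∀ n : ℕ, N < n → ∀ k : ℕ, 1 ≤ k → (k : ℝ) ≤ 2 ^ n * T →
      H (((k : ℝ) - 1) * ((2 : ℝ) ^ n)⁻¹) ((k : ℝ) * ((2 : ℝ) ^ n)⁻¹) ≤
        C₄ * modFun (((2 : ℝ) ^ n)⁻¹)) :
    ∃ C : ℝ, 0 < C ∧ ∀ r s : ℝ,
      (∃ k n : ℕ, r = (k : ℝ) * ((2 : ℝ) ^ n)⁻¹) →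
      (∃ k n : ℕ, s = (k : ℝ) * ((2 : ℝ) ^ n)⁻¹) →
      0 ≤ r → s ≤ T → 0 < s - r → s - r ≤ ((2 : ℝ) ^ N)⁻¹ →
      H r s ≤ C * modFun (s - r) :=
  dyadic_chaining_general T C₄ hC₄ N hN H hHrr htri hdy
end
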